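/- arXiv:2504.18647 — 5 statements merged into one kernel-verified Lean document; each statement's English description precedes it below -/
import Mathlib

section
/- Let p ∈ (0,1), z ∈ (−1,1) be real, set m = (p − z)/(1 − p·z), and let τ ∈ ℂ with |τ| = 1. Then |p·τ² − p·z·m − τ²·(z + m) + 2·τ·z·m| = |z·m| · |p·τ² − p·z·m − 2·τ + z + m|. (Consequently, the right-hand side of the Green-function formula for the bidisk with equal weights, evaluated along the slice z₂ = m_p(z₁) with z₁ real, equals log|z₁·m_p(z₁)| for every unimodular τ.) -/
theorem slice_consistency (p z : ℝ) (hp : 0 < p) (hp1 : p < 1) (hz : -1 < z) (hz1 : z < 1)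
    (m : ℝ) (hm : m = (p - z) / (1 - p * z)) (τ : ℂ) (hτ : ‖τ‖ = 1) :
    ‖(p : ℂ) * τ ^ 2 - (p : ℂ) * (z : ℂ) * (m : ℂ) - τ ^ 2 * ((z : ℂ) + (m : ℂ))
        + 2 * τ * (z : ℂ) * (m : ℂ)‖ =
      ‖(z : ℂ) * (m : ℂ)‖ *
        ‖(p : ℂ) * τ ^ 2 - (p : ℂ) * (z : ℂ) * (m : ℂ) - 2 * τ + ((z : ℂ) + (m : ℂ))‖ := by
  have hd : (1:ℝ) - p * z ≠ 0 := by nlinarith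
  have key : z + m = p + p * z * m := by
    have hd' : (1:ℝ) - z * p ≠ 0 := by rwa [mul_comm]
    rw [hm]; field_simp; ring
  have keyC : (z : ℂ) + (m : ℂ) = (p : ℂ) + (p : ℂ) * (z : ℂ) * (m : ℂ) := by
    exact_mod_cast congrArg (Complex.ofReal) key
  have hfac : (p : ℂ) * τ ^ 2 - (p : ℂ) * (z : ℂ) * (m : ℂ) - τ ^ 2 * ((z : ℂ) + (m : ℂ))
      + 2 * τ * (z : ℂ) * (m : ℂ)
      = -((z : ℂ) * (m : ℂ)) *
        ((p : ℂ) * τ ^ 2 - (p : ℂ) * (z : ℂ) * (m : ℂ) - 2 * τ + ((z : ℂ) + (m : ℂ))) := by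
    linear_combination ((z : ℂ) * (m : ℂ) - τ ^ 2) * keyC
  rw [hfac, norm_mul, norm_neg]
end

section
/- Let p, q ∈ ℝ, z = x + i·y ∈ ℂ with x, y ∈ ℝ, and θ ∈ ℝ; write u = e^{iθ}. Then (u − z)·(conj(z)·u − 1)·(u² − 1)²·p² − (u − q)·(conj(z)·u² − z)²·(q·u − 1) = 4·u³·( p²·sin²θ·(x² + y² + 1 − 2·x·cos θ − 2·y·sin θ) − (q² − 2·q·cos θ + 1)·(x·sin θ − y·cos θ)² ). -/
/-!
With `u = e^{iθ}` one has `cos θ = Re u`, `sin θ = Im u`, and the real bracket is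
`p² (Im u)² |u - z|² - |u - q|² (Im (z̄ u))²`. Writing `Im w = (w - w̄) / 2i`, `|w|² = w w̄` and
`ū = u⁻¹` turns it into a Laurent polynomial in `u`, `z`, `z̄`, and multiplying by `4 u³` gives the
left-hand side as an identity of rational functions in which `z̄` may be any independent variable.
-/

open Complex ComplexConjugate

theorem fundamental_polynomial_eq_of_inv {K : Type*} [Field K] (p q z w u : K) (hu : u ≠ 0) :
    (u - z) * (w * u - 1) * (u ^ 2 - 1) ^ 2 * p ^ 2 - (u - q) * (w * u ^ 2 - z) ^ 2 * (q * u - 1) =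
      -u ^ 3 * (p ^ 2 * (u - u⁻¹) ^ 2 * ((u - z) * (u⁻¹ - w))
        - (u - q) * (u⁻¹ - q) * (w * u - z * u⁻¹) ^ 2) := by
  field_simp
  ring

namespace Complex

lemma ofReal_im_sq (w : ℂ) : (w.im : ℂ) ^ 2 = -(w - conj w) ^ 2 / 4 := by
  rw [im_eq_sub_conj]
  field_simp
  rw [I_sq]
  ring

lemma im_conj_mul (z w : ℂ) : (conj z * w).im = z.re * w.im - z.im * w.re := by
  simp only [mul_im, conj_re, conj_im]
  ring

section UnitCircle

variable {u : ℂ} (hu : ‖u‖ = 1)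
include hu

lemma re_sq_add_im_sq_of_norm_eq_one : u.re ^ 2 + u.im ^ 2 = 1 := by
  have h := normSq_eq_norm_sq u
  rw [hu, normSq_apply] at h
  linear_combination h

lemma normSq_sub_of_norm_eq_one (z : ℂ) :
    normSq (u - z) = z.re ^ 2 + z.im ^ 2 + 1 - 2 * z.re * u.re - 2 * z.im * u.im := by
  rw [normSq_apply]
  simp only [sub_re, sub_im]
  linear_combination re_sq_add_im_sq_of_norm_eq_one hu

lemma normSq_sub_ofReal_of_norm_eq_one (q : ℝ) :
    normSq (u - q) = q ^ 2 - 2 * q * u.re + 1 := by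
  rw [normSq_sub_of_norm_eq_one hu, ofReal_re, ofReal_im]
  ring

end UnitCircle

end Complex

theorem fundamental_polynomial_real_form (p q x y θ : ℝ) (z u : ℂ)
    (hz : z = Complex.mk x y) (hu : u = Complex.exp (θ * Complex.I)) :
    (u - z) * ((starRingEnd ℂ) z * u - 1) * (u ^ 2 - 1) ^ 2 * (p : ℂ) ^ 2
      - (u - (q : ℂ)) * ((starRingEnd ℂ) z * u ^ 2 - z) ^ 2 * ((q : ℂ) * u - 1) =
    4 * u ^ 3 * (((p ^ 2 * Real.sin θ ^ 2 *
        (x ^ 2 + y ^ 2 + 1 - 2 * x * Real.cos θ - 2 * y * Real.sin θ)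
      - (q ^ 2 - 2 * q * Real.cos θ + 1) * (x * Real.sin θ - y * Real.cos θ) ^ 2 : ℝ) : ℂ)) := by
  have hu₁ : ‖u‖ = 1 := hu ▸ norm_exp_ofReal_mul_I θ
  have hconj : conj u = u⁻¹ := (inv_eq_conj hu₁).symm
  obtain ⟨rfl, rfl⟩ : x = z.re ∧ y = z.im := by simp [hz]
  rw [show Real.cos θ = u.re by rw [hu, exp_ofReal_mul_I_re],
    show Real.sin θ = u.im by rw [hu, exp_ofReal_mul_I_im]]
  rw [← normSq_sub_of_norm_eq_one hu₁, ← normSq_sub_ofReal_of_norm_eq_one hu₁, ← im_conj_mul]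
  push_cast
  rw [← mul_conj, ← mul_conj, ofReal_im_sq, ofReal_im_sq]
  simp only [map_sub, map_mul, conj_conj, conj_ofReal, hconj]
  rw [fundamental_polynomial_eq_of_inv _ _ _ _ _ (norm_ne_zero_iff.mp (by simp [hu₁]))]
  ring
end

section
/- Let p, q > 0 and let z = x + i·y with x ≠ 0 and y ≠ 0. Define F(θ) = p²·sin²θ·(x² + y² + 1 − 2·x·cos θ − 2·y·sin θ) − (q² − 2·q·cos θ + 1)·(x·sin θ − y·cos θ)². Then there exists θ ∈ ℝ with F(θ) = 0. -/
theorem fundamental_polynomial_has_root (p q x y : ℝ) (hp : 0 < p) (hq : 0 < q)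
    (hx : x ≠ 0) (hy : y ≠ 0) :
    ∃ θ : ℝ,
      p ^ 2 * Real.sin θ ^ 2 *
          (x ^ 2 + y ^ 2 + 1 - 2 * x * Real.cos θ - 2 * y * Real.sin θ)
        - (q ^ 2 - 2 * q * Real.cos θ + 1) * (x * Real.sin θ - y * Real.cos θ) ^ 2 = 0 := by
  set F : ℝ → ℝ := fun θ =>
    p ^ 2 * Real.sin θ ^ 2 *
        (x ^ 2 + y ^ 2 + 1 - 2 * x * Real.cos θ - 2 * y * Real.sin θ)
      - (q ^ 2 - 2 * q * Real.cos θ + 1) * (x * Real.sin θ - y * Real.cos θ) ^ 2 with hF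
  have hcont : Continuous F := by
    apply Continuous.sub <;> continuity
  -- F 0 ≤ 0
  have h0 : F 0 ≤ 0 := by
    simp only [hF, Real.sin_zero, Real.cos_zero]
    nlinarith [sq_nonneg ((q - 1) * y), sq_nonneg y]
  -- pick θ₁ with cos θ₁ = -x/r, sin θ₁ = -y/r
  set w : ℂ := ⟨-x, -y⟩ with hw
  have hwne : w ≠ 0 := by
    intro h
    apply hx
    have := congrArg Complex.re h
    simpa [hw] using this
  set r : ℝ := ‖w‖ with hr
  have hrpos : 0 < r := norm_pos_iff.mpr hwne
  have hcos : Real.cos w.arg = -x / r := by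
    rw [Complex.cos_arg hwne]
  have hsin : Real.sin w.arg = -y / r := by
    rw [Complex.sin_arg]
  have hr2 : r ^ 2 = x ^ 2 + y ^ 2 := by
    rw [hr, Complex.sq_norm, Complex.normSq_apply]; simp only [hw]; ring
  have h1 : 0 < F w.arg := by
    simp only [hF, hcos, hsin]
    have hx0 : x * (-y / r) - y * (-x / r) = 0 := by field_simp; ring
    rw [hx0]
    have hy2 : 0 < y ^ 2 := by positivity
    have : x ^ 2 + y ^ 2 + 1 - 2 * x * (-x / r) - 2 * y * (-y / r)
        = r ^ 2 + 1 + 2 * r := by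
      field_simp
      nlinarith [hr2]
    rw [this]
    have : (-y / r) ^ 2 = y ^ 2 / r ^ 2 := by ring
    rw [this]
    have h2 : 0 < r ^ 2 + 1 + 2 * r := by positivity
    have hpos : 0 < p ^ 2 * (y ^ 2 / r ^ 2) * (r ^ 2 + 1 + 2 * r) := by positivity
    nlinarith [hpos]
  -- IVT
  have hsub : Set.uIcc (F 0) (F w.arg) ⊆ F '' Set.uIcc 0 w.arg :=
    intermediate_value_uIcc hcont.continuousOn
  have : (0 : ℝ) ∈ Set.uIcc (F 0) (F w.arg) :=
    Set.mem_uIcc.2 (Or.inl ⟨h0, le_of_lt h1⟩)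
  obtain ⟨θ, _, hθ⟩ := hsub this
  exact ⟨θ, hθ⟩
end

section
/- Let p, q ∈ (0,1) and let z be real with −p < z < min{1, p/q}. Set c² = p·(p + z − p·z − q·z)/(p + q − p·q − q·z). Then the denominator p + q − p·q − q·z is positive, and max{p², z²} < c² < 1. -/
/-!
Write c² = N / D with N = p (p + z − p z − q z) and D = p + q − p q − q z. Each of the
three inequalities p² D < N, z² D < N, N < D is the positivity of a product of factors
that the hypotheses make positive:
N − p² D = p (1 − p) (p + z) (1 − q), N − z² D = (1 − z) (p + z) (p − q z) and
D − N = (1 − z) (1 − p) (p + q); moreover D = p (1 − q) + q (1 − z) > 0.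
-/

section CSquared

variable {p q z : ℝ}

theorem c_squared_den_pos (hp0 : 0 < p) (hq0 : 0 < q) (hq1 : q < 1) (hz1 : z < 1) :
    0 < p + q - p * q - q * z := by
  have hsplit : p + q - p * q - q * z = p * (1 - q) + q * (1 - z) := by ring
  rw [hsplit]
  exact add_pos (mul_pos hp0 (sub_pos.2 hq1)) (mul_pos hq0 (sub_pos.2 hz1))

theorem sq_mul_c_squared_den_lt_num (hp0 : 0 < p) (hp1 : p < 1) (hq1 : q < 1) (hz : -p < z) :
    p ^ 2 * (p + q - p * q - q * z) < p * (p + z - p * z - q * z) := by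
  have hfactor : p * (p + z - p * z - q * z) - p ^ 2 * (p + q - p * q - q * z) =
      p * (1 - p) * (p + z) * (1 - q) := by ring
  have hpos : 0 < p * (1 - p) * (p + z) * (1 - q) :=
    mul_pos (mul_pos (mul_pos hp0 (sub_pos.2 hp1)) (by linarith)) (sub_pos.2 hq1)
  linarith

theorem z_sq_mul_c_squared_den_lt_num (hz0 : -p < z) (hz1 : z < 1) (hqz : q * z < p) :
    z ^ 2 * (p + q - p * q - q * z) < p * (p + z - p * z - q * z) := by
  have hfactor : p * (p + z - p * z - q * z) - z ^ 2 * (p + q - p * q - q * z) =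
      (1 - z) * (p + z) * (p - q * z) := by ring
  have hpos : 0 < (1 - z) * (p + z) * (p - q * z) :=
    mul_pos (mul_pos (sub_pos.2 hz1) (by linarith)) (sub_pos.2 hqz)
  linarith

theorem c_squared_num_lt_den (hp1 : p < 1) (hpq : 0 < p + q) (hz1 : z < 1) :
    p * (p + z - p * z - q * z) < p + q - p * q - q * z := by
  have hfactor : (p + q - p * q - q * z) - p * (p + z - p * z - q * z) =
      (1 - z) * (1 - p) * (p + q) := by ring
  have hpos : 0 < (1 - z) * (1 - p) * (p + q) :=
    mul_pos (mul_pos (sub_pos.2 hz1) (sub_pos.2 hp1)) hpq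
  linarith

end CSquared

theorem c_squared_bounds (p q z : ℝ) (hp0 : 0 < p) (hp1 : p < 1) (hq0 : 0 < q) (hq1 : q < 1)
    (hz1 : -p < z) (hz2 : z < min 1 (p / q)) :
    0 < p + q - p * q - q * z ∧
    max (p ^ 2) (z ^ 2) < p * (p + z - p * z - q * z) / (p + q - p * q - q * z) ∧
    p * (p + z - p * z - q * z) / (p + q - p * q - q * z) < 1 := by
  have hz_lt_one : z < 1 := hz2.trans_le (min_le_left _ _)
  have hqz : q * z < p := (lt_div_iff₀' hq0).1 (hz2.trans_le (min_le_right _ _))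
  have hden := c_squared_den_pos hp0 hq0 hq1 hz_lt_one
  refine ⟨hden, max_lt ?_ ?_, ?_⟩
  · exact (lt_div_iff₀ hden).2 (sq_mul_c_squared_den_lt_num hp0 hp1 hq1 hz1)
  · exact (lt_div_iff₀ hden).2 (z_sq_mul_c_squared_den_lt_num hz1 hz_lt_one hqz)
  · exact (div_lt_one hden).2 (c_squared_num_lt_den hp1 (add_pos hp0 hq0) hz_lt_one)
end

section
/- Let α, β ∈ 𝔻 with α ≠ β, let t ∈ (0,1), set γ = t·α + (1−t)·β and τ = conj(α − β)/(α − β), and let ω ∈ ℂ with |ω| = 1. Define G(w₁, w₂) = (t·w₁ + (1−t)·conj(ω)·w₂ + τ·conj(ω)·w₁·w₂)/(1 + τ·((1−t)·w₁ + t·conj(ω)·w₂)). Then for every λ ∈ 𝔻 (such that the denominators do not vanish), G(λ·m_α(λ), ω·λ·m_β(λ)) = λ·m_γ(λ), where m_a(λ) = (a − λ)/(1 − conj(a)·λ). -/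
set_option maxHeartbeats 1000000


theorem agler_mccarthy_identity (α β γ τ ω : ℂ) (t : ℝ)
    (hα : ‖α‖ < 1) (hβ : ‖β‖ < 1) (hαβ : α ≠ β)
    (ht0 : 0 < t) (ht1 : t < 1)
    (hγ : γ = (t : ℂ) * α + (1 - (t : ℂ)) * β)
    (hτ : τ = (starRingEnd ℂ) (α - β) / (α - β))
    (hω : ‖ω‖ = 1)
    (lam : ℂ) (hlam : ‖lam‖ < 1)
    (hden : 1 + τ * ((1 - (t : ℂ)) * (lam * ((α - lam) / (1 - (starRingEnd ℂ) α * lam)))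
        + (t : ℂ) * (starRingEnd ℂ) ω * (ω * lam * ((β - lam) / (1 - (starRingEnd ℂ) β * lam)))) ≠ 0) :
    ((t : ℂ) * (lam * ((α - lam) / (1 - (starRingEnd ℂ) α * lam)))
        + (1 - (t : ℂ)) * (starRingEnd ℂ) ω * (ω * lam * ((β - lam) / (1 - (starRingEnd ℂ) β * lam)))
        + τ * (starRingEnd ℂ) ω * (lam * ((α - lam) / (1 - (starRingEnd ℂ) α * lam)))
            * (ω * lam * ((β - lam) / (1 - (starRingEnd ℂ) β * lam)))) /
      (1 + τ * ((1 - (t : ℂ)) * (lam * ((α - lam) / (1 - (starRingEnd ℂ) α * lam)))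
        + (t : ℂ) * (starRingEnd ℂ) ω * (ω * lam * ((β - lam) / (1 - (starRingEnd ℂ) β * lam))))) =
    lam * ((γ - lam) / (1 - (starRingEnd ℂ) γ * lam)) := by
  have hω0 : ω ≠ 0 := by
    intro h; simp [h] at hω
  have hω' : (starRingEnd ℂ) ω * ω = 1 := by
    rw [mul_comm, Complex.mul_conj]
    norm_cast
    simp [Complex.normSq_eq_norm_sq, hω]
  have hωinv : (starRingEnd ℂ) ω = ω⁻¹ := eq_inv_of_mul_eq_one_left hω'
  have hαβ' : α - β ≠ 0 := sub_ne_zero.mpr hαβ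
  have habs : ∀ z : ℂ, ‖z‖ < 1 → 1 - (starRingEnd ℂ) z * lam ≠ 0 := by
    intro z hz h
    have h1 : (starRingEnd ℂ) z * lam = 1 := by linear_combination -h
    have := congrArg (‖·‖) h1
    simp only [norm_mul, Complex.norm_conj, norm_one] at this
    nlinarith [norm_nonneg z, norm_nonneg lam]
  have h1 := habs α hα
  have h2 := habs β hβ
  have hγabs : ‖γ‖ < 1 := by
    rw [hγ]
    calc ‖(t : ℂ) * α + (1 - (t : ℂ)) * β‖
        ≤ ‖(t : ℂ) * α‖ + ‖(1 - (t : ℂ)) * β‖ := norm_add_le _ _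
      _ < 1 := by
          simp only [norm_mul]
          have e1 : ‖(t : ℂ)‖ = t := by
            rw [Complex.norm_real, Real.norm_eq_abs, abs_of_pos ht0]
          have e2 : ‖(1 - (t : ℂ))‖ = 1 - t := by
            rw [show (1 - (t : ℂ)) = ((1 - t : ℝ) : ℂ) by push_cast; ring,
              Complex.norm_real, Real.norm_eq_abs, abs_of_pos (by linarith)]
          rw [e1, e2]
          nlinarith [norm_nonneg α, norm_nonneg β]
  have h3 := habs γ hγabs
  have hcγ : (starRingEnd ℂ) γ = (t : ℂ) * (starRingEnd ℂ) α + (1 - (t : ℂ)) * (starRingEnd ℂ) β := by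
    rw [hγ]; simp [map_add, map_mul, map_sub, Complex.conj_ofReal]
  have hτ' : τ = ((starRingEnd ℂ) α - (starRingEnd ℂ) β) / (α - β) := by
    rw [hτ, map_sub]
  rw [hcγ] at h3
  rw [div_eq_iff hden, hcγ, hγ, hτ']
  have h1' : 1 - lam * (starRingEnd ℂ) α ≠ 0 := by rwa [mul_comm]
  have h2' : 1 - lam * (starRingEnd ℂ) β ≠ 0 := by rwa [mul_comm]
  have h3' : 1 - lam * ((t : ℂ) * (starRingEnd ℂ) α + (1 - (t : ℂ)) * (starRingEnd ℂ) β) ≠ 0 := by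
    rwa [mul_comm]
  rw [hωinv]
  field_simp
  ring
end
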